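/- Let n ≥ 2, let ε₆ and ε_n be primitive 6th and n-th roots of unity in ℂ, and set α = ε₆·(ε₆ + ε_n)/(1 − ε_n). Then (α + ε₆⁵)/(α + ε₆) = ε_n; consequently, the Möbius transformation z ↦ (αz − 1)/(z + α + 1), corresponding to the matrix [[α, −1],[1, α+1]], has order exactly n in PGL₂(ℂ). -/

import Mathlib

open Polynomial

/-- h(i) = 0, -1, -1, 0, 1, 1 according as i = 0,1,2,3,4,5 (mod 6). -/
def hcoef (i : ℕ) : ℤ :=
  match i % 6 with
  | 0 => 0 | 1 => -1 | 2 => -1 | 3 => 0 | 4 => 1 | _ => 1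

/-- g(i) = 1, -m, -m-1, -1, m, m+1 according as i = 0,1,2,3,4,5 (mod 6). -/
def gcoef (m : ℚ) (i : ℕ) : ℚ :=
  match i % 6 with
  | 0 => 1 | 1 => -m | 2 => -m - 1 | 3 => -1 | 4 => m | _ => m + 1

/-- f_m^{(n)}(X) = sum_{i=0}^n C(n,i) X^i g(n-i). -/
noncomputable def fpol (m : ℚ) (n : ℕ) : ℚ[X] :=
  ∑ i ∈ Finset.range (n + 1), C ((n.choose i : ℚ) * gcoef m (n - i)) * X ^ i

/-- r^{(n)}(X) = sum_{i=0}^n C(n,i) X^i h(n-i). -/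
noncomputable def rpol (n : ℕ) : ℤ[X] :=
  ∑ i ∈ Finset.range (n + 1), C ((n.choose i : ℤ) * hcoef (n - i)) * X ^ i

theorem stmt11 (n : ℕ) (hn : 2 ≤ n) (e6 en : ℂ)
    (h6 : IsPrimitiveRoot e6 6) (hen : IsPrimitiveRoot en n)
    (α : ℂ) (hα : α = e6 * (e6 + en) / (1 - en)) :
    (α + e6 ^ 5) / (α + e6) = en ∧
      (∃ c : ℂ, (!![α, -1; 1, α + 1]) ^ n = c • (1 : Matrix (Fin 2) (Fin 2) ℂ)) ∧
      ∀ k : ℕ, 0 < k → k < n →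
        ¬∃ c : ℂ, (!![α, -1; 1, α + 1]) ^ k = c • (1 : Matrix (Fin 2) (Fin 2) ℂ) := by
  have h6pow : e6 ^ 6 = 1 := h6.pow_eq_one
  have h3 : e6 ^ 3 = -1 := by
    have h31 : e6 ^ 3 ≠ 1 := h6.pow_ne_one_of_pos_of_lt (by norm_num) (by norm_num)
    have : (e6 ^ 3 - 1) * (e6 ^ 3 + 1) = 0 := by linear_combination h6pow
    rcases mul_eq_zero.mp this with h | h
    · exact absurd (by linear_combination h : e6 ^ 3 = 1) h31
    · linear_combination h
  have hne1 : e6 ≠ -1 := by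
    intro h
    have : e6 ^ 2 = 1 := by rw [h]; ring
    exact h6.pow_ne_one_of_pos_of_lt (by norm_num) (by norm_num) this
  have h2' : e6 ^ 2 - e6 + 1 = 0 := by
    have : (e6 + 1) * (e6 ^ 2 - e6 + 1) = 0 := by linear_combination h3
    rcases mul_eq_zero.mp this with h | h
    · exact absurd (by linear_combination h : e6 = -1) hne1
    · exact h
  have hd : 2 * e6 - 1 ≠ 0 := by
    intro h
    have : (3 : ℂ) = 0 := by linear_combination (-(2*e6-1)) * h + 4 * h2'
    norm_num at this
  have hen1 : (1 : ℂ) - en ≠ 0 := sub_ne_zero.mpr (Ne.symm (hen.ne_one hn))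
  have h5 : e6 ^ 5 = 1 - e6 := by linear_combination (e6^3 + e6^2 - 1) * h2'
  have hαen : α * (1 - en) = e6 * (e6 + en) := by
    rw [hα]; field_simp
  have haen : (α + e6) * (1 - en) = 2 * e6 - 1 := by linear_combination hαen + h2'
  have ha_ne : α + e6 ≠ 0 := by
    intro h
    apply hd
    rw [← haen, h, zero_mul]
  have hb : α + 1 - e6 = en * (α + e6) := by
    apply mul_right_cancel₀ hen1
    linear_combination hαen - en * haen + h2'
  set M : Matrix (Fin 2) (Fin 2) ℂ := !![α, -1; 1, α + 1] with hM
  set A : Matrix (Fin 2) (Fin 2) ℂ := M - (α + 1 - e6) • 1 with hA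
  set B : Matrix (Fin 2) (Fin 2) ℂ := M - (α + e6) • 1 with hB
  have hMA : M * A = (α + e6) • A := by
    ext i j
    fin_cases i <;> fin_cases j <;>
      simp [hA, hM, Matrix.mul_apply, Fin.sum_univ_two, Matrix.one_apply]
    all_goals first | ring1 | linear_combination -h2'
  have hMB : M * B = (α + 1 - e6) • B := by
    ext i j
    fin_cases i <;> fin_cases j <;>
      simp [hB, hM, Matrix.mul_apply, Fin.sum_univ_two, Matrix.one_apply]
    all_goals first | ring1 | linear_combination -h2'
  have key : ∀ k : ℕ, (2 * e6 - 1) • M ^ k = (α + e6) ^ k • A - (α + 1 - e6) ^ k • B := by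
    intro k
    induction k with
    | zero =>
      simp only [pow_zero, one_smul, hA, hB]
      ext i j
      fin_cases i <;> fin_cases j <;>
        simp [hM, Matrix.one_apply] <;> ring
    | succ k ih =>
      rw [pow_succ', ← mul_smul_comm, ih, mul_sub, mul_smul_comm, mul_smul_comm, hMA, hMB,
        smul_smul, smul_smul, ← pow_succ, ← pow_succ]
  refine ⟨?_, ?_, ?_⟩
  · have : α + e6 ^ 5 = en * (α + e6) := by rw [h5]; linear_combination hb
    rw [this, mul_div_assoc, div_self ha_ne, mul_one]
  · refine ⟨(α + e6) ^ n, ?_⟩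
    have hμn : (α + 1 - e6) ^ n = (α + e6) ^ n := by
      rw [hb, mul_pow, hen.pow_eq_one, one_mul]
    have h1 : (2 * e6 - 1) • M ^ n = (2 * e6 - 1) • ((α + e6) ^ n • (1 : Matrix (Fin 2) (Fin 2) ℂ)) := by
      rw [key n, hμn, ← smul_sub, hA, hB]
      rw [smul_comm]
      congr 1
      ext i j
      fin_cases i <;> fin_cases j <;> simp [hM, Matrix.one_apply] <;> ring
    exact smul_right_injective _ hd h1
  · rintro k hk0 hkn ⟨c, hc⟩
    have hk := key k
    have h01 := congrFun (congrFun hk 0) 1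
    rw [hc] at h01
    simp [hA, hB, hM, Matrix.one_apply] at h01
    -- h01 should give (α+e6)^k = (α+1-e6)^k up to sign
    have heq : (α + 1 - e6) ^ k = (α + e6) ^ k := by linear_combination -h01
    rw [hb, mul_pow] at heq
    have hak : (α + e6) ^ k ≠ 0 := pow_ne_zero _ ha_ne
    have : en ^ k = 1 := by
      field_simp at heq
      exact mul_right_cancel₀ hak (by rw [heq, one_mul])
    exact hen.pow_ne_one_of_pos_of_lt hk0.ne' hkn this
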